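/- Let α > 0, a > 0, b > 0, β > 0 and let r be a nonnegative integer. Then the r-th moment of the OGE-LFR distribution is finite, i.e., the integral ∫₀^∞ x^r · α β (a + b x) exp(a x + (b/2) x²) exp(-α(exp(a x + (b/2) x²) - 1)) (1 - exp(-α(exp(a x + (b/2) x²) - 1)))^{β - 1} dx converges to a finite value. -/

import Mathlib

/-!
The density is the derivative of the distribution function `(1 - exp (-α u))^β`, where
`u = exp (a x + b x² / 2) - 1`; as a nonnegative derivative of a function with a limit at
infinity, it is integrable on `(0, ∞)`. Writing `v = exp (-α u / 2)`, the factorisation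
`1 - v² = (1 - v)(1 + v)` shows that the density with parameter `α` is `2 v (1 + v)^(β - 1)` times the density with
parameter `α / 2`. Since `u ≥ a x`, the factor `x^r v` is bounded by `x^r exp (-α a x / 2)`,
so the `r`-th moment is dominated by a multiple of an integrable density.
-/

/-- The OGE-LFR probability density function. -/
noncomputable def ogeLfrPdf (α a b β x : ℝ) : ℝ :=
  α * β * (a + b * x) * Real.exp (a * x + b / 2 * x ^ 2) *
    Real.exp (-α * (Real.exp (a * x + b / 2 * x ^ 2) - 1)) *
    (1 - Real.exp (-α * (Real.exp (a * x + b / 2 * x ^ 2) - 1))) ^ (β - 1)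

open Real MeasureTheory Set Filter Topology

noncomputable def ogeLfrCdf (α a b β x : ℝ) : ℝ :=
  (1 - exp (-α * (exp (a * x + b / 2 * x ^ 2) - 1))) ^ β

theorem pow_mul_exp_neg_mul_le {c x : ℝ} (hc : 0 < c) (hx : 0 ≤ x) (r : ℕ) :
    x ^ r * exp (-(c * x)) ≤ r.factorial / c ^ r := by
  have h := pow_div_factorial_le_exp _ (mul_nonneg hc.le hx) r
  rw [div_le_iff₀ (by positivity), mul_pow] at h
  rw [le_div_iff₀ (by positivity), exp_neg]
  calc x ^ r * (exp (c * x))⁻¹ * c ^ r = c ^ r * x ^ r * (exp (c * x))⁻¹ := by ring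
    _ ≤ exp (c * x) * r.factorial * (exp (c * x))⁻¹ := by gcongr
    _ = r.factorial := by field_simp

section OgeLfr

variable {α a b β x : ℝ}

theorem hasDerivAt_ogeLfrCdf (hα : 0 < α) (ha : 0 < a) (hb : 0 ≤ b) (hx : 0 < x) :
    HasDerivAt (ogeLfrCdf α a b β) (ogeLfrPdf α a b β x) x := by
  have hg : HasDerivAt (fun x => a * x + b / 2 * x ^ 2) (a + b * x) x := by
    refine (((hasDerivAt_id x).const_mul a).add
      ((hasDerivAt_pow 2 x).const_mul (b / 2))).congr_deriv ?_
    simp only [Nat.cast_ofNat]; ring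
  have hH := (((hg.exp.sub_const 1).const_mul (-α)).exp).const_sub 1
  have hpos : 0 < 1 - exp (-α * (exp (a * x + b / 2 * x ^ 2) - 1)) := by
    have : 0 < exp (a * x + b / 2 * x ^ 2) - 1 := by
      rw [sub_pos, one_lt_exp_iff]; positivity
    rw [sub_pos, exp_lt_one_iff]; nlinarith
  refine (hH.rpow_const (p := β) (Or.inl hpos.ne')).congr_deriv ?_
  unfold ogeLfrPdf; ring

theorem continuous_ogeLfrCdf (hβ : 0 ≤ β) : Continuous (ogeLfrCdf α a b β) :=
  Continuous.rpow_const (by fun_prop) fun _ => Or.inr hβ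

theorem tendsto_ogeLfrCdf_atTop (hα : 0 < α) (ha : 0 < a) (hb : 0 ≤ b) :
    Tendsto (ogeLfrCdf α a b β) atTop (𝓝 1) := by
  have hg : Tendsto (fun x => a * x + b / 2 * x ^ 2) atTop atTop :=
    tendsto_atTop_add_right_of_le _ 0 (tendsto_id.const_mul_atTop ha) fun x => by positivity
  have hu : Tendsto (fun x => -α * (exp (a * x + b / 2 * x ^ 2) - 1)) atTop atBot :=
    (tendsto_atTop_add_const_right _ (-1) (tendsto_exp_atTop.comp hg)).const_mul_atTop_of_neg
      (neg_neg_of_pos hα)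
  have hH := (tendsto_exp_atBot.comp hu).const_sub 1
  rw [sub_zero] at hH
  rw [← one_rpow β]
  exact hH.rpow_const (Or.inl one_ne_zero)

theorem ogeLfrPdf_nonneg (hα : 0 ≤ α) (ha : 0 ≤ a) (hb : 0 ≤ b) (hβ : 0 ≤ β) (hx : 0 ≤ x) :
    0 ≤ ogeLfrPdf α a b β x := by
  have hH : 0 ≤ 1 - exp (-α * (exp (a * x + b / 2 * x ^ 2) - 1)) := by
    have : 0 ≤ exp (a * x + b / 2 * x ^ 2) - 1 := by
      rw [sub_nonneg, one_le_exp_iff]; positivity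
    rw [sub_nonneg, exp_le_one_iff]; nlinarith
  unfold ogeLfrPdf
  have := rpow_nonneg hH (β - 1)
  positivity

theorem integrableOn_ogeLfrPdf (hα : 0 < α) (ha : 0 < a) (hb : 0 ≤ b) (hβ : 0 < β) :
    IntegrableOn (ogeLfrPdf α a b β) (Ioi 0) :=
  integrableOn_Ioi_deriv_of_nonneg (continuous_ogeLfrCdf hβ.le).continuousWithinAt
    (fun _ hx => hasDerivAt_ogeLfrCdf hα ha hb hx)
    (fun _ hx => ogeLfrPdf_nonneg hα.le ha.le hb hβ.le (le_of_lt hx))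
    (tendsto_ogeLfrCdf_atTop hα ha hb)

theorem ogeLfrPdf_eq_mul_ogeLfrPdf_half (hα : 0 ≤ α) (ha : 0 ≤ a) (hb : 0 ≤ b) (hx : 0 ≤ x) :
    ogeLfrPdf α a b β x =
      2 * exp (-(α / 2) * (exp (a * x + b / 2 * x ^ 2) - 1)) *
        (1 + exp (-(α / 2) * (exp (a * x + b / 2 * x ^ 2) - 1))) ^ (β - 1) *
        ogeLfrPdf (α / 2) a b β x := by
  set v := exp (-(α / 2) * (exp (a * x + b / 2 * x ^ 2) - 1))
  have hv_sq : exp (-α * (exp (a * x + b / 2 * x ^ 2) - 1)) = v ^ 2 := by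
    rw [← exp_nat_mul]; ring_nf
  have hv_le : v ≤ 1 := by
    have : 0 ≤ exp (a * x + b / 2 * x ^ 2) - 1 := by
      rw [sub_nonneg, one_le_exp_iff]; positivity
    rw [exp_le_one_iff]; nlinarith
  have hfactor : 1 - v ^ 2 = (1 - v) * (1 + v) := by ring
  unfold ogeLfrPdf
  rw [hv_sq, hfactor, mul_rpow (by linarith) (by positivity)]
  ring

theorem pow_mul_ogeLfrPdf_le (hα : 0 < α) (ha : 0 < a) (hb : 0 ≤ b) (hβ : 0 ≤ β) (hx : 0 ≤ x)
    (r : ℕ) :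
    x ^ r * ogeLfrPdf α a b β x ≤
      2 * (r.factorial / (α * a / 2) ^ r) * 2 ^ β * ogeLfrPdf (α / 2) a b β x := by
  rw [ogeLfrPdf_eq_mul_ogeLfrPdf_half hα.le ha.le hb hx]
  set v := exp (-(α / 2) * (exp (a * x + b / 2 * x ^ 2) - 1))
  have hv_le : v ≤ exp (-(α * a / 2 * x)) := by
    have hax : a * x ≤ exp (a * x + b / 2 * x ^ 2) - 1 := by
      linarith [add_one_le_exp (a * x + b / 2 * x ^ 2), show 0 ≤ b / 2 * x ^ 2 by positivity]
    have := mul_le_mul_of_nonneg_left hax (half_pos hα).le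
    exact exp_le_exp.mpr (by linarith)
  have hv_pos : 0 < v := exp_pos _
  have hv_one : v ≤ 1 := hv_le.trans (exp_le_one_iff.mpr (by simp only [neg_nonpos]; positivity))
  have hpow : x ^ r * v ≤ r.factorial / (α * a / 2) ^ r :=
    (mul_le_mul_of_nonneg_left hv_le (by positivity)).trans
      (pow_mul_exp_neg_mul_le (by positivity) hx r)
  have hv_rpow : (1 + v) ^ (β - 1) ≤ 2 ^ β :=
    calc (1 + v) ^ (β - 1) ≤ (1 + v) ^ β :=
          rpow_le_rpow_of_exponent_le (by linarith) (by linarith)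
      _ ≤ 2 ^ β := by gcongr; linarith
  have hpdf := ogeLfrPdf_nonneg (β := β) (half_pos hα).le ha.le hb hβ hx
  calc x ^ r * (2 * v * (1 + v) ^ (β - 1) * ogeLfrPdf (α / 2) a b β x)
      = 2 * (x ^ r * v) * (1 + v) ^ (β - 1) * ogeLfrPdf (α / 2) a b β x := by ring
    _ ≤ 2 * (r.factorial / (α * a / 2) ^ r) * 2 ^ β * ogeLfrPdf (α / 2) a b β x := by
      gcongr

end OgeLfr

/-- For every nonnegative integer r, the r-th moment of the OGE-LFR
distribution is finite, i.e. `x ↦ x^r · f(x)` is integrable on (0, ∞). -/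
theorem ogeLfr_moment_finite (α a b β : ℝ) (hα : 0 < α) (ha : 0 < a) (hb : 0 < b)
    (hβ : 0 < β) (r : ℕ) :
    MeasureTheory.IntegrableOn (fun x : ℝ => x ^ r * ogeLfrPdf α a b β x)
      (Set.Ioi (0 : ℝ)) := by
  have hmeas : AEStronglyMeasurable (fun x : ℝ => x ^ r * ogeLfrPdf α a b β x) := by
    unfold ogeLfrPdf; fun_prop
  refine ((integrableOn_ogeLfrPdf (half_pos hα) ha hb.le hβ).const_mul
    (2 * (r.factorial / (α * a / 2) ^ r) * 2 ^ β)).mono' hmeas.restrict ?_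
  filter_upwards [self_mem_ae_restrict measurableSet_Ioi] with x hx
  rw [Real.norm_of_nonneg (mul_nonneg (pow_nonneg hx.out.le r)
    (ogeLfrPdf_nonneg hα.le ha.le hb.le hβ.le hx.out.le))]
  exact pow_mul_ogeLfrPdf_le hα ha hb.le hβ.le hx.out.le r
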